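/- arXiv:1608.06422 — 7 statements merged into one kernel-verified Lean document; each statement's English description precedes it below -/
import Mathlib

section
/- Let $A, E \in \mathbb{R}^{n\times n}$ and $B \in \mathbb{R}^{n\times m}$, and let $B = Q_1 R$ with $Q = [Q_1\ Q_2] \in \mathbb{R}^{n\times n}$ orthogonal, $Q_1 \in \mathbb{R}^{n\times m}$, and $R \in \mathbb{R}^{m\times m}$ invertible. If for some $\lambda \in \mathbb{C}$ the matrix $[\lambda E - A\ \ B]$ has full row rank $n$, then $Q_2^\top(\lambda E - A) \in \mathbb{C}^{(n-m)\times n}$ has full row rank $n-m$. -/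
/-!
If `vᵀ Q₂ᵀ (λE - A) = 0`, then `w = Q₂ v` annihilates `λE - A` from the left, and also
`B = Q₁ R` because `Q₂ᵀ Q₁ = 0`; full row rank of `[λE - A  B]` forces `w = 0`, and
`v = Q₂ᵀ Q₂ v = Q₂ᵀ w = 0`.
-/

open Matrix

namespace Matrix

variable {K : Type*} [Field K] {k n p q : Type*} [Fintype k] [Fintype n]

theorem linearIndependent_row_of_rank_eq_card [Fintype p] {M : Matrix n p K}
    (h : M.rank = Fintype.card n) : LinearIndependent K M.row := by
  rw [linearIndependent_iff_card_eq_finrank_span, Set.finrank, ← rank_eq_finrank_span_row, h]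

theorem linearIndependent_row_of_mul_eq_one [DecidableEq k] {P : Matrix k n K}
    {S : Matrix n k K} (h : P * S = 1) : LinearIndependent K P.row := by
  refine vecMul_injective_iff.mp (Function.LeftInverse.injective (g := (· ᵥ* S)) fun v => ?_)
  simp only [vecMul_vecMul, h, vecMul_one]

theorem rank_mul_eq_card_of_rank_fromCols_eq_card [Fintype p] [Fintype q] {P : Matrix k n K}
    {M : Matrix n p K} {C : Matrix n q K} (hrank : (fromCols M C).rank = Fintype.card n)
    (hPC : P * C = 0) (hP : LinearIndependent K P.row) : (P * M).rank = Fintype.card k := by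
  have hMC := vecMul_injective_iff.mpr (linearIndependent_row_of_rank_eq_card hrank)
  refine LinearIndependent.rank_matrix (vecMul_injective_iff.mp fun v w hvw => ?_)
  have hC (u : k → K) : u ᵥ* P ᵥ* C = 0 := by rw [vecMul_vecMul, hPC, vecMul_zero]
  have hM : v ᵥ* P ᵥ* M = w ᵥ* P ᵥ* M := by simpa only [vecMul_vecMul] using hvw
  refine vecMul_injective_iff.mpr hP (hMC ?_)
  simp only [vecMul_fromCols, hM, hC]

end Matrix

theorem Matrix.transpose_mul_of_fromCols_transpose_mul_self_eq_one {R l m n : Type*}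
    [CommRing R] [Fintype n] [DecidableEq l] [DecidableEq m]
    {Q1 : Matrix n l R} {Q2 : Matrix n m R} (h : (fromCols Q1 Q2)ᵀ * fromCols Q1 Q2 = 1) :
    Q2ᵀ * Q1 = 0 ∧ Q2ᵀ * Q2 = 1 := by
  rw [transpose_fromCols, fromRows_mul_fromCols, ← fromBlocks_one, fromBlocks_inj] at h
  exact h.2.2

theorem stmt0_general {n m k : ℕ}
    (A E : Matrix (Fin n) (Fin n) ℝ) (B : Matrix (Fin n) (Fin m) ℝ)
    (Q1 : Matrix (Fin n) (Fin m) ℝ) (Q2 : Matrix (Fin n) (Fin k) ℝ)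
    (R : Matrix (Fin m) (Fin m) ℝ)
    (hQ : (fromCols Q1 Q2)ᵀ * fromCols Q1 Q2 = 1)
    (hB : B = Q1 * R)
    (lam : ℂ)
    (hrank : (fromCols (lam • E.map Complex.ofReal - A.map Complex.ofReal)
        (B.map Complex.ofReal)).rank = n) :
    ((Q2.map Complex.ofReal)ᵀ *
      (lam • E.map Complex.ofReal - A.map Complex.ofReal)).rank = k := by
  obtain ⟨hQ21, hQ22⟩ := transpose_mul_of_fromCols_transpose_mul_self_eq_one hQ
  have map_ofReal_mul :
      ∀ {a b c : ℕ} (X : Matrix (Fin a) (Fin b) ℝ) (Y : Matrix (Fin b) (Fin c) ℝ),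
      (X * Y).map Complex.ofReal = X.map Complex.ofReal * Y.map Complex.ofReal :=
    fun X Y => Matrix.map_mul (f := Complex.ofRealHom)
  have hQB : (Q2.map Complex.ofReal)ᵀ * B.map Complex.ofReal = 0 := by
    rw [← transpose_map, ← map_ofReal_mul, hB, ← Matrix.mul_assoc, hQ21, Matrix.zero_mul,
      Matrix.map_zero _ rfl]
  have hQQ : (Q2.map Complex.ofReal)ᵀ * Q2.map Complex.ofReal = 1 := by
    rw [← transpose_map, ← map_ofReal_mul, hQ22, Matrix.map_one _ rfl rfl]
  simpa using rank_mul_eq_card_of_rank_fromCols_eq_card (by simpa using hrank) hQB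
    (linearIndependent_row_of_mul_eq_one hQQ)

/-- if `[λE - A  B]` has full row rank `n`, then `Q₂ᵀ(λE - A)` has
full row rank `n - m` (here `k = n - m`). -/
theorem stmt0 {n m k : ℕ} (hk : m + k = n)
    (A E : Matrix (Fin n) (Fin n) ℝ) (B : Matrix (Fin n) (Fin m) ℝ)
    (Q1 : Matrix (Fin n) (Fin m) ℝ) (Q2 : Matrix (Fin n) (Fin k) ℝ)
    (R : Matrix (Fin m) (Fin m) ℝ)
    (hQ : (fromCols Q1 Q2)ᵀ * fromCols Q1 Q2 = 1)
    (hQ' : fromCols Q1 Q2 * (fromCols Q1 Q2)ᵀ = 1)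
    (hB : B = Q1 * R) (hR : IsUnit R.det)
    (lam : ℂ)
    (hrank : (fromCols (lam • E.map Complex.ofReal - A.map Complex.ofReal)
        (B.map Complex.ofReal)).rank = n) :
    ((Q2.map Complex.ofReal)ᵀ *
      (lam • E.map Complex.ofReal - A.map Complex.ofReal)).rank = k :=
  stmt0_general A E B Q1 Q2 R hQ hB lam hrank
end

section
/- Let $A, E \in \mathbb{R}^{n\times n}$, $\alpha, \beta \in \mathbb{C}$, and $v = x + iy$ with $x,y \in \mathbb{R}^n$ satisfy $\beta A v = \alpha E v$. Let $c,s \in \mathbb{R}$ with $c^2+s^2=1$ and set $\tilde{x} = cx - sy$, $\tilde{y} = sx + cy$. Suppose $\tilde{x}, \tilde{y} \neq 0$, and let $v_1 = \tilde{x}/\|\tilde{x}\|$, $v_2 = \tilde{y}/\|\tilde{y}\|$, $\delta = \|\tilde{x}\|/\|\tilde{y}\|$. Then $A[v_1\ v_2]D_\delta(\beta) = E[v_1\ v_2]D_\delta(\alpha)$. -/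
/-!
Writing `W = [x y]`, the real and imaginary parts of `β A v = α E v` say exactly
`A W D₁(β) = E W D₁(α)`, where `D₁(z)` is the real `2 × 2` representation of `z`.
The rotated pair is `[x̃ ỹ] = W D₁(c + i s)`, and the matrices `D₁(·)` commute, so the rotated
pair satisfies the same relation. Normalization is right multiplication by
`diag(a⁻¹, b⁻¹)` with `a = ‖x̃‖`, `b = ‖ỹ‖`, and `diag(a⁻¹, b⁻¹) D_{a/b}(z) = D₁(z) diag(a⁻¹, b⁻¹)`.
-/

open Matrix

/-- The real `2 × 2` matrix `D_δ(λ)`. -/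
noncomputable def Ddelta (δ : ℝ) (lam : ℂ) : Matrix (Fin 2) (Fin 2) ℝ :=
  !![lam.re, δ * lam.im; -δ⁻¹ * lam.im, lam.re]

section

variable {l m : Type*}

def twoCols (x y : m → ℝ) : Matrix m (Fin 2) ℝ :=
  Matrix.of fun i j => ![x i, y i] j

theorem Ddelta_one_mul_comm (z w : ℂ) :
    Ddelta 1 z * Ddelta 1 w = Ddelta 1 w * Ddelta 1 z := by
  ext i j; fin_cases i <;> fin_cases j <;> simp [Ddelta, Matrix.mul_apply, Fin.sum_univ_two] <;> ring

theorem diagonal_inv_mul_Ddelta_div {a b : ℝ} (ha : a ≠ 0) (hb : b ≠ 0) (z : ℂ) :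
    diagonal ![a⁻¹, b⁻¹] * Ddelta (a / b) z = Ddelta 1 z * diagonal ![a⁻¹, b⁻¹] := by
  ext i j; fin_cases i <;> fin_cases j <;> simp [Ddelta, Matrix.mul_apply, Fin.sum_univ_two] <;>
    field_simp

theorem twoCols_mul_Ddelta_one (x y : m → ℝ) (c s : ℝ) :
    twoCols x y * Ddelta 1 ⟨c, s⟩ = twoCols (c • x - s • y) (s • x + c • y) := by
  ext i j; fin_cases j <;> simp [twoCols, Ddelta, Matrix.mul_apply, Fin.sum_univ_two] <;> ring

theorem twoCols_smul (x y : m → ℝ) (a b : ℝ) :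
    twoCols (a • x) (b • y) = twoCols x y * diagonal ![a, b] := by
  ext i j; fin_cases j <;> simp [twoCols, mul_comm]

theorem mul_twoCols [Fintype m] (A : Matrix l m ℝ) (x y : m → ℝ) :
    A * twoCols x y = twoCols (A *ᵥ x) (A *ᵥ y) := by
  ext i j; fin_cases j <;> simp [twoCols, mul_apply, mulVec, dotProduct]

theorem map_ofReal_mulVec_add_mul_I [Fintype m] (A : Matrix l m ℝ) (x y : m → ℝ) :
    A.map Complex.ofReal *ᵥ (fun i => (x i : ℂ) + (y i : ℂ) * Complex.I) =
      fun i => ((A *ᵥ x) i : ℂ) + ((A *ᵥ y) i : ℂ) * Complex.I := by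
  ext i
  simp [mulVec, dotProduct, mul_add, Finset.sum_add_distrib, Finset.sum_mul, mul_assoc]

theorem mul_twoCols_Ddelta_one_of_eigen [Fintype m] {A E : Matrix l m ℝ} {α β : ℂ} {x y : m → ℝ}
    (h : β • (A.map Complex.ofReal) *ᵥ (fun i => (x i : ℂ) + (y i : ℂ) * Complex.I) =
      α • (E.map Complex.ofReal) *ᵥ (fun i => (x i : ℂ) + (y i : ℂ) * Complex.I)) :
    A * twoCols x y * Ddelta 1 β = E * twoCols x y * Ddelta 1 α := by
  simp only [map_ofReal_mulVec_add_mul_I, funext_iff, Pi.smul_apply, smul_eq_mul,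
    Complex.ext_iff] at h
  rw [mul_twoCols, mul_twoCols]
  ext i j
  fin_cases j <;> simp [twoCols, Ddelta, mul_apply, Fin.sum_univ_two] at h ⊢ <;> linarith [h i]

theorem mul_Ddelta_one_mul_of_mul_Ddelta_one [Fintype m] {A E : Matrix l m ℝ} {α β : ℂ}
    {W : Matrix m (Fin 2) ℝ} (h : A * W * Ddelta 1 β = E * W * Ddelta 1 α) (z : ℂ) :
    A * (W * Ddelta 1 z) * Ddelta 1 β = E * (W * Ddelta 1 z) * Ddelta 1 α := by
  simp only [Matrix.mul_assoc, Ddelta_one_mul_comm z]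
  simp only [← Matrix.mul_assoc, h]

theorem mul_diagonal_Ddelta_div_of_mul_Ddelta_one [Fintype m] {A E : Matrix l m ℝ} {α β : ℂ}
    {W : Matrix m (Fin 2) ℝ} (h : A * W * Ddelta 1 β = E * W * Ddelta 1 α)
    {a b : ℝ} (ha : a ≠ 0) (hb : b ≠ 0) :
    A * (W * diagonal ![a⁻¹, b⁻¹]) * Ddelta (a / b) β =
      E * (W * diagonal ![a⁻¹, b⁻¹]) * Ddelta (a / b) α := by
  simp only [Matrix.mul_assoc, diagonal_inv_mul_Ddelta_div ha hb]
  simp only [← Matrix.mul_assoc, h]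

theorem sqrt_dotProduct_self_ne_zero [Fintype m] {w : m → ℝ} (hw : w ≠ 0) : √(w ⬝ᵥ w) ≠ 0 := by
  have hnonneg : 0 ≤ w ⬝ᵥ w := Fintype.sum_nonneg fun i => mul_self_nonneg (w i)
  rwa [Ne, Real.sqrt_eq_zero hnonneg, dotProduct_self_eq_zero]

end

theorem stmt8_general {n : ℕ} (A E : Matrix (Fin n) (Fin n) ℝ) (α β : ℂ)
    (x y : Fin n → ℝ) (v : Fin n → ℂ)
    (hv : v = fun i => (x i : ℂ) + (y i : ℂ) * Complex.I)
    (heig : β • (A.map Complex.ofReal).mulVec v = α • (E.map Complex.ofReal).mulVec v)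
    (c s : ℝ)
    (tx ty : Fin n → ℝ) (htx : tx = c • x - s • y) (hty : ty = s • x + c • y)
    (htx0 : tx ≠ 0) (hty0 : ty ≠ 0)
    (v1 v2 : Fin n → ℝ)
    (hv1 : v1 = (Real.sqrt (tx ⬝ᵥ tx))⁻¹ • tx)
    (hv2 : v2 = (Real.sqrt (ty ⬝ᵥ ty))⁻¹ • ty)
    (δ : ℝ) (hδ : δ = Real.sqrt (tx ⬝ᵥ tx) / Real.sqrt (ty ⬝ᵥ ty))
    (V : Matrix (Fin n) (Fin 2) ℝ) (hV : V = Matrix.of fun i j => ![v1 i, v2 i] j) :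
    A * V * Ddelta δ β = E * V * Ddelta δ α := by
  subst hv
  have hrot := mul_Ddelta_one_mul_of_mul_Ddelta_one (mul_twoCols_Ddelta_one_of_eigen heig) ⟨c, s⟩
  rw [twoCols_mul_Ddelta_one, ← htx, ← hty] at hrot
  have hV_twoCols : V = twoCols tx ty * diagonal ![(√(tx ⬝ᵥ tx))⁻¹, (√(ty ⬝ᵥ ty))⁻¹] := by
    rw [hV, hv1, hv2, ← twoCols_smul]; rfl
  rw [hV_twoCols, hδ]
  exact mul_diagonal_Ddelta_div_of_mul_Ddelta_one hrot (sqrt_dotProduct_self_ne_zero htx0)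
    (sqrt_dotProduct_self_ne_zero hty0)

/-- after a Jacobi rotation and normalization of the real and imaginary
parts of the eigenvector, `A [v₁ v₂] D_δ(β) = E [v₁ v₂] D_δ(α)`. -/
theorem stmt8 {n : ℕ} (A E : Matrix (Fin n) (Fin n) ℝ) (α β : ℂ)
    (x y : Fin n → ℝ) (v : Fin n → ℂ)
    (hv : v = fun i => (x i : ℂ) + (y i : ℂ) * Complex.I)
    (heig : β • (A.map Complex.ofReal).mulVec v = α • (E.map Complex.ofReal).mulVec v)
    (c s : ℝ) (hcs : c ^ 2 + s ^ 2 = 1)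
    (tx ty : Fin n → ℝ) (htx : tx = c • x - s • y) (hty : ty = s • x + c • y)
    (htx0 : tx ≠ 0) (hty0 : ty ≠ 0)
    (v1 v2 : Fin n → ℝ)
    (hv1 : v1 = (Real.sqrt (tx ⬝ᵥ tx))⁻¹ • tx)
    (hv2 : v2 = (Real.sqrt (ty ⬝ᵥ ty))⁻¹ • ty)
    (δ : ℝ) (hδ : δ = Real.sqrt (tx ⬝ᵥ tx) / Real.sqrt (ty ⬝ᵥ ty))
    (V : Matrix (Fin n) (Fin 2) ℝ) (hV : V = Matrix.of fun i j => ![v1 i, v2 i] j) :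
    A * V * Ddelta δ β = E * V * Ddelta δ α :=
  stmt8_general A E α β x y v hv heig c s tx ty htx hty htx0 hty0 v1 v2 hv1 hv2 δ hδ V hV
end

section
/- Let $Q = [Q_1\ Q_2] \in \mathbb{R}^{n\times n}$ be orthogonal with $Q_1 \in \mathbb{R}^{n\times m}$, $Q_2 \in \mathbb{R}^{n\times(n-m)}$, and let $\Xi \in \mathbb{R}^{(n-m)\times n}$ have full row rank. Let $\Xi^\top = Q_{1,X}R_X$ be a QR factorization with $Q_X = [Q_{1,X}\ Q_{2,X}] \in \mathbb{R}^{n\times n}$ orthogonal, $Q_{1,X} \in \mathbb{R}^{n\times(n-m)}$, and $R_X$ invertible upper triangular. Then the matrix $X = Q_1 Q_{2,X}^\top + Q_2 \Xi$ is nonsingular. -/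
/-!
Writing `Ξ = Rₓᵀ Q₁ₓᵀ`, the matrix `X` factors as `[Q₁ Q₂] · [Q₂ₓᵀ ; Rₓᵀ Q₁ₓᵀ]`.
Since `[Q₁ₓ Q₂ₓ]` has orthonormal columns, the second factor has the right inverse
`[Q₂ₓ  Q₁ₓ Rₓ⁻ᵀ]`, so `X` has the right inverse `[Q₂ₓ  Q₁ₓ Rₓ⁻ᵀ] · [Q₁ Q₂]ᵀ`.
-/

open Matrix

section

variable {R : Type*} [CommRing R] {n m k : Type*} [Fintype n] [DecidableEq m] [DecidableEq k]

theorem Matrix.fromCols_transpose_mul_self_eq_one_iff (U : Matrix n k R) (V : Matrix n m R) :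
    (fromCols U V)ᵀ * fromCols U V = 1 ↔
      Uᵀ * U = 1 ∧ Uᵀ * V = 0 ∧ Vᵀ * U = 0 ∧ Vᵀ * V = 1 := by
  rw [transpose_fromCols, fromRows_mul_fromCols, ← fromBlocks_one, fromBlocks_inj]

theorem Matrix.fromRows_transpose_mul_fromCols_eq_one [Fintype k]
    {U : Matrix n k R} {V : Matrix n m R} {S : Matrix k k R}
    (horth : (fromCols U V)ᵀ * fromCols U V = 1) (hS : IsUnit S.det) :
    fromRows Vᵀ (S * Uᵀ) * fromCols V (U * S⁻¹) = 1 := by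
  obtain ⟨hUU, hUV, hVU, hVV⟩ := (fromCols_transpose_mul_self_eq_one_iff U V).mp horth
  rw [fromRows_mul_fromCols, ← fromBlocks_one, fromBlocks_inj]
  refine ⟨hVV, ?_, ?_, ?_⟩
  · rw [← Matrix.mul_assoc, hVU, Matrix.zero_mul]
  · rw [Matrix.mul_assoc, hUV, Matrix.mul_zero]
  · rw [Matrix.mul_assoc, ← Matrix.mul_assoc Uᵀ, hUU, Matrix.one_mul, mul_nonsing_inv _ hS]

theorem Matrix.isUnit_det_mul_transpose_add_mul_mul_transpose [Fintype m] [Fintype k]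
    [DecidableEq n] {Q₁ : Matrix n m R} {Q₂ : Matrix n k R} {U : Matrix n k R} {V : Matrix n m R}
    {S : Matrix k k R} (hQ : fromCols Q₁ Q₂ * (fromCols Q₁ Q₂)ᵀ = 1)
    (horth : (fromCols U V)ᵀ * fromCols U V = 1) (hS : IsUnit S.det) :
    IsUnit (Q₁ * Vᵀ + Q₂ * (S * Uᵀ)).det := by
  refine isUnit_det_of_right_inverse (B := fromCols V (U * S⁻¹) * (fromCols Q₁ Q₂)ᵀ) ?_
  calc (Q₁ * Vᵀ + Q₂ * (S * Uᵀ)) * (fromCols V (U * S⁻¹) * (fromCols Q₁ Q₂)ᵀ)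
      = fromCols Q₁ Q₂ * (fromRows Vᵀ (S * Uᵀ) * fromCols V (U * S⁻¹)) * (fromCols Q₁ Q₂)ᵀ := by
        simp only [← fromCols_mul_fromRows, Matrix.mul_assoc]
    _ = 1 := by rw [fromRows_transpose_mul_fromCols_eq_one horth hS, Matrix.mul_one, hQ]

end

theorem stmt13_general {n m k : ℕ}
    (Q1 : Matrix (Fin n) (Fin m) ℝ) (Q2 : Matrix (Fin n) (Fin k) ℝ)
    (hQ' : fromCols Q1 Q2 * (fromCols Q1 Q2)ᵀ = 1)
    (Ξ : Matrix (Fin k) (Fin n) ℝ)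
    (Q1X : Matrix (Fin n) (Fin k) ℝ) (Q2X : Matrix (Fin n) (Fin m) ℝ)
    (RX : Matrix (Fin k) (Fin k) ℝ)
    (hQX : (fromCols Q1X Q2X)ᵀ * fromCols Q1X Q2X = 1)
    (hRX : IsUnit RX.det)
    (hQR : Ξᵀ = Q1X * RX) :
    IsUnit (Q1 * Q2Xᵀ + Q2 * Ξ).det := by
  have hΞ : Ξ = RXᵀ * Q1Xᵀ := by rw [← transpose_transpose Ξ, hQR, transpose_mul]
  rw [hΞ]
  exact isUnit_det_mul_transpose_add_mul_mul_transpose hQ' hQX (by rwa [det_transpose])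

/-- `X = Q₁Q₂ₓᵀ + Q₂Ξ` is nonsingular, where `Ξ` has full row rank,
`Ξᵀ = Q₁ₓRₓ` is a QR factorization, and `[Q₁ Q₂]`, `[Q₁ₓ Q₂ₓ]` are orthogonal. -/
theorem stmt13 {n m k : ℕ} (hk : m + k = n)
    (Q1 : Matrix (Fin n) (Fin m) ℝ) (Q2 : Matrix (Fin n) (Fin k) ℝ)
    (hQ : (fromCols Q1 Q2)ᵀ * fromCols Q1 Q2 = 1)
    (hQ' : fromCols Q1 Q2 * (fromCols Q1 Q2)ᵀ = 1)
    (Ξ : Matrix (Fin k) (Fin n) ℝ) (hΞ : Ξ.rank = k)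
    (Q1X : Matrix (Fin n) (Fin k) ℝ) (Q2X : Matrix (Fin n) (Fin m) ℝ)
    (RX : Matrix (Fin k) (Fin k) ℝ)
    (hQX : (fromCols Q1X Q2X)ᵀ * fromCols Q1X Q2X = 1)
    (hQX' : fromCols Q1X Q2X * (fromCols Q1X Q2X)ᵀ = 1)
    (hRX : IsUnit RX.det) (hRXtri : RX.BlockTriangular id)
    (hQR : Ξᵀ = Q1X * RX) :
    IsUnit (Q1 * Q2Xᵀ + Q2 * Ξ).det :=
  stmt13_general Q1 Q2 hQ' Ξ Q1X Q2X RX hQX hRX hQR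
end

section
/- Let $Q_2 \in \mathbb{R}^{n\times(n-m)}$ satisfy $Q_2^\top Q_2 = I_{n-m}$, let $Z \in \mathbb{R}^{n\times l}$, $X \in \mathbb{R}^{n\times j}$, and let $W \in \mathbb{R}^{l\times j}$ have full column rank $j$ (with $j \le l$). Then the matrix $M = \begin{pmatrix} Q_2^\top A Z & -Q_2^\top & -Q_2^\top X \\ W^\top & 0 & 0 \end{pmatrix}$ has full row rank $(n-m)+j$, for any $A \in \mathbb{R}^{n\times n}$; equivalently, $\dim \mathcal{N}(M) = m + l$. -/
/-!
`M` has a right inverse: `Wᵀ` has the right inverse `P = W (WᵀW)⁻¹`, the block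
`[-Q₂ᵀ, -Q₂ᵀX]` has the right inverse `[-Q₂; 0]`, and for such block matrices
`[B C; D 0] [0 P; S -SBP] = 1` whenever `CS = 1` and `DP = 1`.
A matrix with a right inverse has full row rank.
-/

open Matrix

namespace Matrix

variable {R m n o p : Type*}

theorem rank_eq_card_of_mul_eq_one [CommRing R] [StrongRankCondition R] [Fintype m] [Fintype n]
    [DecidableEq m] {A : Matrix m n R} {B : Matrix n m R} (h : A * B = 1) :
    A.rank = Fintype.card m :=
  le_antisymm A.rank_le_card_height (by simpa [h, rank_one] using rank_mul_le_left A B)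

theorem isUnit_of_rank_eq_card [Field R] [Fintype n] [DecidableEq n] {A : Matrix n n R}
    (h : A.rank = Fintype.card n) : IsUnit A := by
  have hrange : LinearMap.range A.mulVecLin = ⊤ := by
    apply Submodule.eq_top_of_finrank_eq
    rw [← rank, h, Module.finrank_fintype_fun_eq_card]
  exact mulVec_surjective_iff_isUnit.mp (LinearMap.range_eq_top.mp hrange)

theorem exists_transpose_mul_eq_one [Field R] [LinearOrder R] [IsStrictOrderedRing R]
    [Fintype m] [Fintype n] [DecidableEq n] (W : Matrix m n R) (hW : W.rank = Fintype.card n) :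
    ∃ P : Matrix m n R, Wᵀ * P = 1 := by
  have hGram : IsUnit (Wᵀ * W) := isUnit_of_rank_eq_card (by rw [rank_transpose_mul_self, hW])
  refine ⟨W * (Wᵀ * W)⁻¹, ?_⟩
  rw [← Matrix.mul_assoc, mul_nonsing_inv _ ((isUnit_iff_isUnit_det _).mp hGram)]

theorem fromBlocks_mul_fromBlocks_eq_one [CommRing R] [Fintype m] [Fintype o] [Fintype p]
    [DecidableEq m] [DecidableEq n] (B : Matrix m o R) {C : Matrix m p R} {D : Matrix n o R}
    {S : Matrix p m R} {P : Matrix o n R} (hC : C * S = 1) (hD : D * P = 1) :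
    fromBlocks B C D 0 * fromBlocks 0 P S (-(S * B * P)) = 1 := by
  rw [fromBlocks_multiply, ← fromBlocks_one]
  simp only [Matrix.mul_zero, zero_add, Matrix.zero_mul, add_zero, Matrix.mul_neg, hC, hD,
    ← Matrix.mul_assoc, Matrix.one_mul, add_neg_cancel, neg_zero]

end Matrix

theorem stmt15_general {n k l j : ℕ}
    (A : Matrix (Fin n) (Fin n) ℝ)
    (Q2 : Matrix (Fin n) (Fin k) ℝ) (hQ2 : Q2ᵀ * Q2 = 1)
    (Z : Matrix (Fin n) (Fin l) ℝ) (X : Matrix (Fin n) (Fin j) ℝ)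
    (W : Matrix (Fin l) (Fin j) ℝ) (hW : W.rank = j) :
    (Matrix.fromBlocks (Q2ᵀ * A * Z) (fromCols (-Q2ᵀ) (-(Q2ᵀ * X)))
        Wᵀ 0).rank = k + j := by
  obtain ⟨P, hP⟩ := exists_transpose_mul_eq_one W (by rw [hW, Fintype.card_fin])
  have hC :
      fromCols (-Q2ᵀ) (-(Q2ᵀ * X)) * fromRows (-Q2) (0 : Matrix (Fin j) (Fin k) ℝ) = 1 := by
    simp [fromCols_mul_fromRows, hQ2]
  simpa using
    rank_eq_card_of_mul_eq_one (fromBlocks_mul_fromBlocks_eq_one (Q2ᵀ * A * Z) hC hP)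

/-- the matrix `M = [[Q₂ᵀAZ, -Q₂ᵀ, -Q₂ᵀX], [Wᵀ, 0, 0]]` has full
row rank `(n - m) + j` (here `k = n - m`, `W` has full column rank `j ≤ l`). -/
theorem stmt15 {n m k l j : ℕ} (hn : m + k = n) (hjl : j ≤ l)
    (A : Matrix (Fin n) (Fin n) ℝ)
    (Q2 : Matrix (Fin n) (Fin k) ℝ) (hQ2 : Q2ᵀ * Q2 = 1)
    (Z : Matrix (Fin n) (Fin l) ℝ) (X : Matrix (Fin n) (Fin j) ℝ)
    (W : Matrix (Fin l) (Fin j) ℝ) (hW : W.rank = j) :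
    (Matrix.fromBlocks (Q2ᵀ * A * Z) (fromCols (-Q2ᵀ) (-(Q2ᵀ * X)))
        Wᵀ 0).rank = k + j :=
  stmt15_general A Q2 hQ2 Z X W hW
end

section
/- Let $Q = [Q_1\ Q_2] \in \mathbb{R}^{n\times n}$ be orthogonal with $Q_1 \in \mathbb{R}^{n\times m}$, and let $A, X_j, Z_1$ and $Z_3, Z_4$ be real matrices of sizes $n\times n$, $n\times j$, $n\times(m+j)$, $j\times(m+j)$, $j\times(m+j)$ respectively, and let $\alpha, \beta \in \mathbb{R}$ with $\alpha \ne 0$. Suppose that the columns of $[Z_1^\top\ Z_3^\top\ Z_4^\top]^\top$ span the null space of $\widetilde{M}_2 = \begin{pmatrix} Q_2^\top(E - \frac{\beta}{\alpha}A) & \frac{\beta}{\alpha}Q_2^\top X_j & -Q_2^\top X_j \\ P_j^\top & 0 & 0 \end{pmatrix}$ for some $E \in \mathbb{R}^{n\times n}$, $P_j \in \mathbb{R}^{n\times j}$. Then each column of $\begin{pmatrix} Z_1 & 0 \\ \frac{\sqrt{\alpha^2+\beta^2}}{\alpha}Q_2Q_2^\top(AZ_1 - X_jZ_3) & Q_1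 \\ Z_3 & 0 \\ Z_4 & 0 \end{pmatrix}$ lies in the null space of $M = \begin{pmatrix} Q_2^\top A & -\frac{\alpha}{\sqrt{\alpha^2+\beta^2}}Q_2^\top & -Q_2^\top X_j & 0 \\ Q_2^\top E & -\frac{\beta}{\sqrt{\alpha^2+\beta^2}}Q_2^\top & 0 & -Q_2^\top X_j \\ P_j^\top & 0 & 0 & 0 \end{pmatrix}$. -/
open Matrix

lemma fromRows_add' {R m₁ m₂ n : Type*} [AddCommMonoid R] (A : Matrix m₁ n R)
    (B : Matrix m₂ n R) (C : Matrix m₁ n R) (D : Matrix m₂ n R) :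
    Matrix.fromRows A B + Matrix.fromRows C D = Matrix.fromRows (A + C) (B + D) := by
  ext (i | i) c <;> simp


/-- if the columns of `[Z₁; Z₃; Z₄]` span the null space of `M̃₂`,
then each displayed column lies in the null space of `M`, i.e. `M * C = 0`. -/
theorem stmt16 {n m k j : ℕ} (hn : m + k = n)
    (A E : Matrix (Fin n) (Fin n) ℝ)
    (Q1 : Matrix (Fin n) (Fin m) ℝ) (Q2 : Matrix (Fin n) (Fin k) ℝ)
    (hQ : (fromCols Q1 Q2)ᵀ * fromCols Q1 Q2 = 1)
    (hQ' : fromCols Q1 Q2 * (fromCols Q1 Q2)ᵀ = 1)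
    (Xj Pj : Matrix (Fin n) (Fin j) ℝ)
    (Z1 : Matrix (Fin n) (Fin (m + j)) ℝ)
    (Z3 Z4 : Matrix (Fin j) (Fin (m + j)) ℝ)
    (α β : ℝ) (hα : α ≠ 0)
    (M2 : Matrix (Fin k ⊕ Fin j) (Fin n ⊕ (Fin j ⊕ Fin j)) ℝ)
    (hM2 : M2 = Matrix.fromBlocks
        (Q2ᵀ * (E - (β / α) • A))
        (fromCols ((β / α) • (Q2ᵀ * Xj)) (-(Q2ᵀ * Xj)))
        Pjᵀ 0)
    (Zstack : Matrix (Fin n ⊕ (Fin j ⊕ Fin j)) (Fin (m + j)) ℝ)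
    (hZ : Zstack = fromRows Z1 (fromRows Z3 Z4))
    (hnull : M2 * Zstack = 0)
    (hspan : ∀ v : (Fin n ⊕ (Fin j ⊕ Fin j)) → ℝ,
        M2.mulVec v = 0 → ∃ c : Fin (m + j) → ℝ, v = Zstack.mulVec c)
    (M : Matrix (Fin k ⊕ (Fin k ⊕ Fin j)) (Fin n ⊕ (Fin n ⊕ (Fin j ⊕ Fin j))) ℝ)
    (hM : M = Matrix.fromBlocks
        (Q2ᵀ * A)
        (fromCols (-((α / Real.sqrt (α ^ 2 + β ^ 2)) • Q2ᵀ))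
          (fromCols (-(Q2ᵀ * Xj)) 0))
        (fromRows (Q2ᵀ * E) Pjᵀ)
        (fromRows
          (fromCols (-((β / Real.sqrt (α ^ 2 + β ^ 2)) • Q2ᵀ))
            (fromCols 0 (-(Q2ᵀ * Xj))))
          0))
    (C : Matrix (Fin n ⊕ (Fin n ⊕ (Fin j ⊕ Fin j))) (Fin (m + j) ⊕ Fin m) ℝ)
    (hC : C = Matrix.fromBlocks
        Z1 0
        (fromRows ((Real.sqrt (α ^ 2 + β ^ 2) / α) • (Q2 * (Q2ᵀ * (A * Z1 - Xj * Z3))))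
          (fromRows Z3 Z4))
        (fromRows Q1 0)) :
    M * C = 0 := by
  subst hM2 hZ hM hC
  have hpos : (0:ℝ) < α ^ 2 + β ^ 2 := by positivity
  have hs : Real.sqrt (α ^ 2 + β ^ 2) ≠ 0 := by positivity
  set s := Real.sqrt (α ^ 2 + β ^ 2) with hsdef
  -- orthogonality facts
  rw [transpose_fromCols, fromRows_mul_fromCols, ← fromBlocks_one,
    fromBlocks_inj] at hQ
  obtain ⟨-, -, hQ21, hQ22⟩ := hQ
  -- null space facts
  rw [fromBlocks_mul_fromRows, fromCols_mul_fromRows, ← fromRows_zero,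
    fromRows_ext_iff] at hnull
  obtain ⟨h1, h2⟩ := hnull
  simp only [Matrix.zero_mul, add_zero] at h2
  have key : (-((α / s) • Q2ᵀ)) * ((s / α) • (Q2 * (Q2ᵀ * (A * Z1 - Xj * Z3))))
      = -(Q2ᵀ * (A * Z1 - Xj * Z3)) := by
    rw [Matrix.neg_mul, Matrix.smul_mul, Matrix.mul_smul, smul_smul,
      div_mul_div_comm, mul_comm α s, div_self (by positivity), one_smul,
      ← Matrix.mul_assoc, hQ22, Matrix.one_mul]
  have key2 : (-((β / s) • Q2ᵀ)) * ((s / α) • (Q2 * (Q2ᵀ * (A * Z1 - Xj * Z3))))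
      = -((β / α) • (Q2ᵀ * (A * Z1 - Xj * Z3))) := by
    have hc : β / s * (s / α) = β / α := by field_simp
    rw [Matrix.neg_mul, Matrix.smul_mul, Matrix.mul_smul, smul_smul, hc,
      ← Matrix.mul_assoc, hQ22, Matrix.one_mul]
  rw [fromBlocks_multiply, ← fromBlocks_zero, fromBlocks_inj]
  refine ⟨?_, ?_, ?_, ?_⟩
  · rw [fromCols_mul_fromRows, fromCols_mul_fromRows, key]
    simp [Matrix.mul_sub, Matrix.mul_assoc]
    abel
  · simp [fromCols_mul_fromRows, Matrix.smul_mul, hQ21]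
  · rw [fromRows_mul, fromRows_mul, fromCols_mul_fromRows,
      fromCols_mul_fromRows, key2, fromRows_add', ← fromRows_zero,
      fromRows_ext_iff]
    constructor
    · simp only [Matrix.mul_sub, Matrix.sub_mul, Matrix.smul_mul, Matrix.mul_smul,
        Matrix.mul_assoc, smul_sub, Matrix.zero_mul, Matrix.neg_mul] at h1 ⊢
      linear_combination (norm := module) h1
    · simpa using h2
  · simp [fromCols_mul_fromRows, Matrix.smul_mul, hQ21]
end

section
/- Let $B \in \mathbb{R}^{n\times m}$ have full column rank with QR factorization $B = Q_1 R$, where $Q = [Q_1\ Q_2]$ is orthogonal and $R$ is invertible. Let $X \in \mathbb{R}^{n\times n}$ be nonsingular, $P \in \mathbb{R}^{n\times n}$ orthogonal, and $S, T \in \mathbb{R}^{n\times n}$. Define $F = R^{-1}Q_1^\top(XSP^\top - A)$ and $G = R^{-1}Q_1^\top(XTP^\top - E)$. Then $(A + BF)P = XS$ and $(E + BG)P = XT$ hold if and only if $Q_2^\top(AP - XS) = 0$ and $Q_2^\top(EP - XT) = 0$. -/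
open Matrix

/-!
Write `Q₁Q₁ᵀ = 1 - Q₂Q₂ᵀ` (orthogonality of `Q = [Q₁ Q₂]`). Since `BR⁻¹Q₁ᵀ = Q₁Q₁ᵀ` and `PᵀP = 1`,
the closed-loop matrix satisfies `(A + BF)P = XS - Q₂Q₂ᵀ(XS - AP)`, and `Q₂` has the left inverse `Q₂ᵀ`,
so the defect `Q₂Q₂ᵀ(XS - AP)` vanishes exactly when `Q₂ᵀ(AP - XS)` does; likewise for `E`, `G`, `T`.
-/

namespace Matrix

variable {α : Type*} {l m n o : Type*}

theorem transpose_mul_self_eq_one_right_of_fromCols [Fintype l] [DecidableEq m] [DecidableEq n]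
    [Semiring α] {Q₁ : Matrix l m α} {Q₂ : Matrix l n α}
    (hQ : (fromCols Q₁ Q₂)ᵀ * fromCols Q₁ Q₂ = 1) : Q₂ᵀ * Q₂ = 1 := by
  rw [transpose_fromCols, fromRows_mul_fromCols, ← fromBlocks_one, fromBlocks_inj] at hQ
  exact hQ.2.2.2

theorem mul_eq_zero_iff_of_left_inverse [Fintype m] [Fintype n] [DecidableEq m] [Semiring α]
    {L : Matrix m n α} {Q : Matrix n m α}
    (hLQ : L * Q = 1) {Y : Matrix m o α} : Q * Y = 0 ↔ Y = 0 := by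
  refine ⟨fun h => ?_, fun h => by rw [h, Matrix.mul_zero]⟩
  rw [← Matrix.one_mul Y, ← hLQ, Matrix.mul_assoc, h, Matrix.mul_zero]

theorem mul_mul_nonsing_inv_mul [Fintype m] [DecidableEq m] [CommRing α] (Q : Matrix n m α)
    {R : Matrix m m α} (hR : IsUnit R.det) (Y : Matrix m o α) :
    Q * R * (R⁻¹ * Y) = Q * Y := by
  rw [Matrix.mul_assoc, ← Matrix.mul_assoc R, mul_nonsing_inv _ hR, Matrix.one_mul]

variable [Ring α] [Fintype l] [Fintype m] [Fintype n] [DecidableEq n]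
  {Q₁ : Matrix n m α} {Q₁' : Matrix m n α} {Q₂ : Matrix n l α} {Q₂' : Matrix l n α} {P P' : Matrix n n α}

theorem add_proj_mul_eq_sub_compl_proj (hQ : Q₁ * Q₁' + Q₂ * Q₂' = 1) (hP : P' * P = 1)
    (M W : Matrix n n α) :
    (M + Q₁ * Q₁' * (W * P' - M)) * P = W - Q₂ * (Q₂' * (W - M * P)) := by
  have hQ₁ : Q₁ * Q₁' = 1 - Q₂ * Q₂' := eq_sub_of_add_eq hQ
  rw [hQ₁, Matrix.add_mul, Matrix.mul_assoc, Matrix.sub_mul (W * P'), Matrix.mul_assoc W,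
    hP, Matrix.mul_one, Matrix.sub_mul, Matrix.one_mul, Matrix.mul_assoc]
  abel

theorem add_proj_mul_eq_iff [DecidableEq l] (hQ : Q₁ * Q₁' + Q₂ * Q₂' = 1) (hQ₂ : Q₂' * Q₂ = 1)
    (hP : P' * P = 1) (M W : Matrix n n α) :
    (M + Q₁ * Q₁' * (W * P' - M)) * P = W ↔ Q₂' * (M * P - W) = 0 := by
  rw [add_proj_mul_eq_sub_compl_proj hQ hP, sub_eq_self, mul_eq_zero_iff_of_left_inverse hQ₂,
    ← neg_sub, Matrix.mul_neg, neg_eq_zero]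

end Matrix

theorem stmt18_general {n m k : ℕ}
    (A E : Matrix (Fin n) (Fin n) ℝ) (B : Matrix (Fin n) (Fin m) ℝ)
    (Q1 : Matrix (Fin n) (Fin m) ℝ) (Q2 : Matrix (Fin n) (Fin k) ℝ)
    (R : Matrix (Fin m) (Fin m) ℝ)
    (hQ : (fromCols Q1 Q2)ᵀ * fromCols Q1 Q2 = 1)
    (hQ' : fromCols Q1 Q2 * (fromCols Q1 Q2)ᵀ = 1)
    (hB : B = Q1 * R) (hR : IsUnit R.det)
    (X P S T : Matrix (Fin n) (Fin n) ℝ)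
    (hP : Pᵀ * P = 1)
    (F G : Matrix (Fin m) (Fin n) ℝ)
    (hF : F = R⁻¹ * Q1ᵀ * (X * S * Pᵀ - A))
    (hG : G = R⁻¹ * Q1ᵀ * (X * T * Pᵀ - E)) :
    ((A + B * F) * P = X * S ∧ (E + B * G) * P = X * T) ↔
      (Q2ᵀ * (A * P - X * S) = 0 ∧ Q2ᵀ * (E * P - X * T) = 0) := by
  have hQ₂ : Q2ᵀ * Q2 = 1 := transpose_mul_self_eq_one_right_of_fromCols hQ
  have hproj : Q1 * Q1ᵀ + Q2 * Q2ᵀ = 1 := by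
    rwa [transpose_fromCols, fromCols_mul_fromRows] at hQ'
  rw [hF, hG, hB, Matrix.mul_assoc R⁻¹, Matrix.mul_assoc R⁻¹, mul_mul_nonsing_inv_mul _ hR,
    mul_mul_nonsing_inv_mul _ hR, ← Matrix.mul_assoc, ← Matrix.mul_assoc]
  exact and_congr (add_proj_mul_eq_iff hproj hQ₂ hP A (X * S))
    (add_proj_mul_eq_iff hproj hQ₂ hP E (X * T))

/-- with `F = R⁻¹Q₁ᵀ(XSPᵀ - A)`, `G = R⁻¹Q₁ᵀ(XTPᵀ - E)`, one has
`(A + BF)P = XS` and `(E + BG)P = XT` iff `Q₂ᵀ(AP - XS) = 0` and `Q₂ᵀ(EP - XT) = 0`. -/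
theorem stmt18 {n m k : ℕ} (hn : m + k = n)
    (A E : Matrix (Fin n) (Fin n) ℝ) (B : Matrix (Fin n) (Fin m) ℝ)
    (Q1 : Matrix (Fin n) (Fin m) ℝ) (Q2 : Matrix (Fin n) (Fin k) ℝ)
    (R : Matrix (Fin m) (Fin m) ℝ)
    (hQ : (fromCols Q1 Q2)ᵀ * fromCols Q1 Q2 = 1)
    (hQ' : fromCols Q1 Q2 * (fromCols Q1 Q2)ᵀ = 1)
    (hB : B = Q1 * R) (hR : IsUnit R.det)
    (X P S T : Matrix (Fin n) (Fin n) ℝ)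
    (hX : IsUnit X.det) (hP : Pᵀ * P = 1) (hP' : P * Pᵀ = 1)
    (F G : Matrix (Fin m) (Fin n) ℝ)
    (hF : F = R⁻¹ * Q1ᵀ * (X * S * Pᵀ - A))
    (hG : G = R⁻¹ * Q1ᵀ * (X * T * Pᵀ - E)) :
    ((A + B * F) * P = X * S ∧ (E + B * G) * P = X * T) ↔
      (Q2ᵀ * (A * P - X * S) = 0 ∧ Q2ᵀ * (E * P - X * T) = 0) :=
  stmt18_general A E B Q1 Q2 R hQ hQ' hB hR X P S T hP F G hF hG
end

section
/- Let $Q_2 \in \mathbb{R}^{n\times(n-m)}$ have orthonormal columns, let $P_j \in \mathbb{R}^{n\times j}$ have orthonormal columns, let $X_j \in \mathbb{R}^{n\times j}$, and let $S_j, T_j \in \mathbb{R}^{j\times j}$ satisfy $Q_2^\top A P_j = Q_2^\top X_j S_j$ and $Q_2^\top E P_j = Q_2^\top X_j T_j$. Let $\epsilon_1, \epsilon_2 \in \mathbb{C}$ with $\epsilon_2 \neq 0$, and assume $Q_2^\top(A - \frac{\epsilon_1}{\epsilon_2}E)$ has full row rank $n-m$. Then the complex matrix $M = \begin{pmatrix}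 Q_2^\top A & -\epsilon_1 Q_2^\top & -Q_2^\top X_j & 0 \\ Q_2^\top E & -\epsilon_2 Q_2^\top & 0 & -Q_2^\top X_j \\ P_j^\top & 0 & 0 & 0 \end{pmatrix}$ has full row rank $2(n-m) + j$; equivalently, $\dim_{\mathbb{C}} \mathcal{N}(M) = 2m + j$. -/
/-!
If `(u, w, p)` lies in the left kernel of `M`, the second block column gives
`(ε₁ u + ε₂ w)ᵀ Q₂ᵀ = 0`, hence `w = -(ε₁/ε₂) u` since `Q₂ᵀ Q₂ = 1`, and the first block column
becomes `uᵀ Q₂ᵀ (A - (ε₁/ε₂) E) + pᵀ Pⱼᵀ = 0`. Multiplying on the right by `Pⱼ`, the deflation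
relations turn the first term into `(uᵀ Q₂ᵀ Xⱼ)(Sⱼ - (ε₁/ε₂) Tⱼ)`, which vanishes by the third
block column; so `p = 0`, then `u = 0` by the full row rank of `Q₂ᵀ (A - (ε₁/ε₂) E)`, and `w = 0`.
A trivial left kernel means full row rank.
-/

open Matrix

namespace Matrix

section RowRank

variable {K : Type*} [Field K] {m n : Type*} [Fintype m] [Fintype n]

theorem rank_eq_card_iff_vecMul_injective (M : Matrix m n K) :
    M.rank = Fintype.card m ↔ Function.Injective M.vecMul := by
  rw [vecMul_injective_iff, linearIndependent_iff_card_eq_finrank_span, rank_eq_finrank_span_row,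
    Set.finrank, eq_comm]

theorem eq_zero_of_vecMul_eq_zero_of_rank_eq_card {M : Matrix m n K}
    (hM : M.rank = Fintype.card m) {v : m → K} (hv : v ᵥ* M = 0) : v = 0 :=
  (rank_eq_card_iff_vecMul_injective M).mp hM (hv.trans (zero_vecMul M).symm)

theorem rank_eq_card_of_vecMul_eq_zero {M : Matrix m n K}
    (hM : ∀ v : m → K, v ᵥ* M = 0 → v = 0) : M.rank = Fintype.card m :=
  (rank_eq_card_iff_vecMul_injective M).mpr <|
    (injective_iff_map_eq_zero M.vecMulLinear).mpr hM

end RowRank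

section PoleAssignment

variable {K : Type*} [Field K] {ι κ μ : Type*} [Fintype ι] [Fintype κ] [Fintype μ]

/-- The matrix `M`, with block rows split as `1 + 2` and block columns as `1 + 3`. -/
def poleAssignmentMatrix (A E : Matrix ι ι K) (Q : Matrix ι κ K) (X P : Matrix ι μ K)
    (ε₁ ε₂ : K) : Matrix (κ ⊕ (κ ⊕ μ)) (ι ⊕ (ι ⊕ (μ ⊕ μ))) K :=
  fromBlocks (Qᵀ * A) (fromCols (-ε₁ • Qᵀ) (fromCols (-(Qᵀ * X)) 0))
    (fromRows (Qᵀ * E) Pᵀ) (fromRows (fromCols (-ε₂ • Qᵀ) (fromCols 0 (-(Qᵀ * X)))) 0)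

theorem sumElim_vecMul_poleAssignmentMatrix (A E : Matrix ι ι K) (Q : Matrix ι κ K)
    (X P : Matrix ι μ K) (ε₁ ε₂ : K) (u w : κ → K) (p : μ → K) :
    Sum.elim u (Sum.elim w p) ᵥ* poleAssignmentMatrix A E Q X P ε₁ ε₂ =
      Sum.elim (u ᵥ* (Qᵀ * A) + w ᵥ* (Qᵀ * E) + p ᵥ* Pᵀ)
        (Sum.elim (-(ε₁ • u ᵥ* Qᵀ + ε₂ • w ᵥ* Qᵀ))
          (Sum.elim (-(u ᵥ* (Qᵀ * X))) (-(w ᵥ* (Qᵀ * X))))) := by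
  simp only [poleAssignmentMatrix, vecMul_fromBlocks, Sum.elim_comp_inl, Sum.elim_comp_inr,
    sumElim_vecMul_fromRows, vecMul_fromCols, vecMul_neg, vecMul_smul, vecMul_zero,
    ← Sum.elim_add_add, add_zero, zero_add, add_assoc, neg_smul, neg_add]

variable [DecidableEq κ] [DecidableEq μ]
  {A E : Matrix ι ι K} {Q : Matrix ι κ K} {X P : Matrix ι μ K} {S T : Matrix μ μ K} {ε₁ ε₂ : K}

theorem eq_zero_of_vecMul_poleAssignmentMatrix_eq_zero (hQ : Qᵀ * Q = 1) (hP : Pᵀ * P = 1)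
    (hS : Qᵀ * A * P = Qᵀ * X * S) (hT : Qᵀ * E * P = Qᵀ * X * T) (hε₂ : ε₂ ≠ 0)
    (hfull : (Qᵀ * (A - (ε₁ / ε₂) • E)).rank = Fintype.card κ) {v : κ ⊕ (κ ⊕ μ) → K}
    (hv : v ᵥ* poleAssignmentMatrix A E Q X P ε₁ ε₂ = 0) : v = 0 := by
  obtain ⟨u, w, p, rfl⟩ : ∃ u w p, v = Sum.elim u (Sum.elim w p) :=
    ⟨v ∘ .inl, v ∘ .inr ∘ .inl, v ∘ .inr ∘ .inr, by ext (_ | _ | _) <;> rfl⟩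
  rw [sumElim_vecMul_poleAssignmentMatrix, ← Sum.elim_zero_zero, ← Sum.elim_zero_zero,
    ← Sum.elim_zero_zero] at hv
  simp only [Sum.elim_eq_iff, neg_eq_zero] at hv
  obtain ⟨hAE, hε, hXu, -⟩ := hv
  set c := ε₁ / ε₂
  have hw : w = -c • u := by
    have h : ε₁ • u + ε₂ • w = 0 := by
      simpa [add_vecMul, smul_vecMul, vecMul_vecMul, hQ] using congrArg (· ᵥ* Q) hε
    rw [neg_smul, eq_neg_iff_add_eq_zero, ← smul_right_injective _ hε₂ |>.eq_iff, smul_add,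
      smul_smul, mul_div_cancel₀ _ hε₂, smul_zero, add_comm, h]
  have hD : u ᵥ* (Qᵀ * (A - c • E)) + p ᵥ* Pᵀ = 0 := by
    rw [← hAE, hw, Matrix.mul_sub, Matrix.mul_smul, vecMul_sub, vecMul_smul, smul_vecMul]
    module
  have hDP : Qᵀ * (A - c • E) * P = Qᵀ * X * (S - c • T) := by
    rw [Matrix.mul_sub, Matrix.sub_mul, Matrix.mul_smul, Matrix.smul_mul, hS, hT, Matrix.mul_sub,
      Matrix.mul_smul]
  have hp : p = 0 := by
    have h := congrArg (· ᵥ* P) hD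
    rwa [add_vecMul, vecMul_vecMul, vecMul_vecMul, hP, vecMul_one, hDP, ← vecMul_vecMul, hXu,
      zero_vecMul, zero_add, zero_vecMul] at h
  have hu : u = 0 := by
    rw [hp, zero_vecMul, add_zero] at hD
    exact eq_zero_of_vecMul_eq_zero_of_rank_eq_card hfull hD
  simp [hu, hw, hp]

theorem rank_poleAssignmentMatrix (hQ : Qᵀ * Q = 1) (hP : Pᵀ * P = 1)
    (hS : Qᵀ * A * P = Qᵀ * X * S) (hT : Qᵀ * E * P = Qᵀ * X * T) (hε₂ : ε₂ ≠ 0)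
    (hfull : (Qᵀ * (A - (ε₁ / ε₂) • E)).rank = Fintype.card κ) :
    (poleAssignmentMatrix A E Q X P ε₁ ε₂).rank = 2 * Fintype.card κ + Fintype.card μ := by
  rw [rank_eq_card_of_vecMul_eq_zero fun _ ↦
    eq_zero_of_vecMul_poleAssignmentMatrix_eq_zero hQ hP hS hT hε₂ hfull]
  simp only [Fintype.card_sum]
  ring

end PoleAssignment

end Matrix

theorem stmt19_general {n k j : ℕ}
    (A E : Matrix (Fin n) (Fin n) ℝ)
    (Q2 : Matrix (Fin n) (Fin k) ℝ) (hQ2 : Q2ᵀ * Q2 = 1)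
    (Pj : Matrix (Fin n) (Fin j) ℝ) (hPj : Pjᵀ * Pj = 1)
    (Xj : Matrix (Fin n) (Fin j) ℝ) (Sj Tj : Matrix (Fin j) (Fin j) ℝ)
    (hS : Q2ᵀ * A * Pj = Q2ᵀ * Xj * Sj) (hT : Q2ᵀ * E * Pj = Q2ᵀ * Xj * Tj)
    (ε1 ε2 : ℂ) (hε2 : ε2 ≠ 0)
    (hfull : ((Q2.map Complex.ofReal)ᵀ *
        (A.map Complex.ofReal - (ε1 / ε2) • E.map Complex.ofReal)).rank = k) :
    (Matrix.fromBlocks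
        ((Q2.map Complex.ofReal)ᵀ * A.map Complex.ofReal)
        (fromCols (-ε1 • (Q2.map Complex.ofReal)ᵀ)
          (fromCols (-((Q2.map Complex.ofReal)ᵀ * Xj.map Complex.ofReal)) 0))
        (fromRows ((Q2.map Complex.ofReal)ᵀ * E.map Complex.ofReal)
          (Pj.map Complex.ofReal)ᵀ)
        (fromRows
          (fromCols (-ε2 • (Q2.map Complex.ofReal)ᵀ)
            (fromCols 0 (-((Q2.map Complex.ofReal)ᵀ * Xj.map Complex.ofReal))))
          0)).rank = 2 * k + j := by
  have hmul {a b c : ℕ} (M : Matrix (Fin a) (Fin b) ℝ) (N : Matrix (Fin b) (Fin c) ℝ) :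
      (M * N).map Complex.ofReal = M.map Complex.ofReal * N.map Complex.ofReal :=
    Matrix.map_mul (f := Complex.ofRealHom)
  have h := rank_poleAssignmentMatrix (S := Sj.map Complex.ofReal) (T := Tj.map Complex.ofReal)
    (by simpa [hmul, transpose_map] using congrArg (·.map Complex.ofReal) hQ2)
    (by simpa [hmul, transpose_map] using congrArg (·.map Complex.ofReal) hPj)
    (by simpa [hmul, transpose_map] using congrArg (·.map Complex.ofReal) hS)
    (by simpa [hmul, transpose_map] using congrArg (·.map Complex.ofReal) hT)
    hε2 (by rwa [Fintype.card_fin])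
  rwa [Fintype.card_fin, Fintype.card_fin] at h

/-- the complex matrix
`M = [[Q₂ᵀA, -ε₁Q₂ᵀ, -Q₂ᵀXⱼ, 0], [Q₂ᵀE, -ε₂Q₂ᵀ, 0, -Q₂ᵀXⱼ], [Pⱼᵀ, 0, 0, 0]]`
has full row rank `2(n - m) + j` (here `k = n - m`). -/
theorem stmt19 {n m k j : ℕ} (hn : m + k = n)
    (A E : Matrix (Fin n) (Fin n) ℝ)
    (Q2 : Matrix (Fin n) (Fin k) ℝ) (hQ2 : Q2ᵀ * Q2 = 1)
    (Pj : Matrix (Fin n) (Fin j) ℝ) (hPj : Pjᵀ * Pj = 1)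
    (Xj : Matrix (Fin n) (Fin j) ℝ) (Sj Tj : Matrix (Fin j) (Fin j) ℝ)
    (hS : Q2ᵀ * A * Pj = Q2ᵀ * Xj * Sj) (hT : Q2ᵀ * E * Pj = Q2ᵀ * Xj * Tj)
    (ε1 ε2 : ℂ) (hε2 : ε2 ≠ 0)
    (hfull : ((Q2.map Complex.ofReal)ᵀ *
        (A.map Complex.ofReal - (ε1 / ε2) • E.map Complex.ofReal)).rank = k) :
    (Matrix.fromBlocks
        ((Q2.map Complex.ofReal)ᵀ * A.map Complex.ofReal)
        (fromCols (-ε1 • (Q2.map Complex.ofReal)ᵀ)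
          (fromCols (-((Q2.map Complex.ofReal)ᵀ * Xj.map Complex.ofReal)) 0))
        (fromRows ((Q2.map Complex.ofReal)ᵀ * E.map Complex.ofReal)
          (Pj.map Complex.ofReal)ᵀ)
        (fromRows
          (fromCols (-ε2 • (Q2.map Complex.ofReal)ᵀ)
            (fromCols 0 (-((Q2.map Complex.ofReal)ᵀ * Xj.map Complex.ofReal))))
          0)).rank = 2 * k + j :=
  stmt19_general A E Q2 hQ2 Pj hPj Xj Sj Tj hS hT ε1 ε2 hε2 hfull
end
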